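/- arXiv:2501.18410 — 11 statements merged into one kernel-verified Lean document; each statement's English description precedes it below -/
import Mathlib

section
/- Let F be a field of characteristic 0 and let A be an F-vector space equipped with a commutative associative bilinear product ·, a Lie bracket [,], and an F-linear map D : A → A that is a derivation of both products (D(a·b) = D(a)·b + a·D(b) and D([a,b]) = [D(a),b] + [a,D(b)]). If (A,·,[,],D) satisfies both the generalized Poisson compatibility identity [a·b,c] = a·[b,c] + [a,c]·b + a·b·D(c) and the transposed Poisson compatibility identity 2 a·[b,c] = [a·b,c] + [b,a·c] for all a,b,c ∈ A, then a·[b,c] = a·D(b)·c − a·b·D(c) and [a·b,c] = D(a)·b·c + a·D(b)·c − a·b·D(c) hold for all a,b,c ∈ A. -/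
/-!
Substituting the generalized Poisson identity into both brackets of the transposed Poisson
identity gives `[a,c]·b - [a,b]·c = a·c·D(b) - a·b·D(c)`. With commutativity, three instances
of this with permuted arguments add up to `2 a·[b,c] = 2 (a·c·D(b) - a·b·D(c))`; cancelling the
`2` gives the first identity, and feeding it back into the generalized Poisson identity gives
the second.
-/

section

variable {R A : Type*} [CommRing R] [AddCommGroup A] [Module R A]
  {mul br : A →ₗ[R] A →ₗ[R] A} {D : A →ₗ[R] A}

theorem mul_br_sub_mul_br
    (hanti : ∀ a b : A, br a b = - br b a)
    (hGP : ∀ a b c : A, br (mul a b) c =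
      mul a (br b c) + mul (br a c) b + mul (mul a b) (D c))
    (hTP : ∀ a b c : A, (2 : R) • mul a (br b c) = br (mul a b) c + br b (mul a c))
    (a b c : A) :
    mul (br a c) b - mul (br a b) c = mul (mul a c) (D b) - mul (mul a b) (D c) := by
  have h := hTP a b c
  rw [two_smul, hanti b (mul a c), hGP a c b, hGP a b c, hanti c b, map_neg] at h
  linear_combination (norm := abel) -h

theorem mul_br_eq [IsAddTorsionFree A]
    (hcomm : ∀ a b : A, mul a b = mul b a)
    (hanti : ∀ a b : A, br a b = - br b a)
    (hGP : ∀ a b c : A, br (mul a b) c =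
      mul a (br b c) + mul (br a c) b + mul (mul a b) (D c))
    (hTP : ∀ a b c : A, (2 : R) • mul a (br b c) = br (mul a b) c + br b (mul a c))
    (a b c : A) :
    mul a (br b c) = mul (mul a c) (D b) - mul (mul a b) (D c) := by
  have key := mul_br_sub_mul_br hanti hGP hTP
  have hab := key a b c
  have hba := key b a c
  have hca := key c a b
  rw [hanti b a, hcomm b a, LinearMap.map_neg₂] at hba
  rw [hanti c b, hanti c a, hcomm c b, hcomm c a, LinearMap.map_neg₂, LinearMap.map_neg₂] at hca
  rw [hcomm a]
  refine nsmul_right_injective two_ne_zero ?_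
  simp only [two_nsmul]
  linear_combination (norm := abel) hba - hca + hab

theorem mul_mul_right_comm_of_comm_assoc (hcomm : ∀ a b : A, mul a b = mul b a)
    (hassoc : ∀ a b c : A, mul (mul a b) c = mul a (mul b c)) (a b c : A) :
    mul (mul a b) c = mul (mul a c) b := by
  rw [hassoc, hcomm b c, ← hassoc]

theorem br_mul_eq (hcomm : ∀ a b : A, mul a b = mul b a)
    (hassoc : ∀ a b c : A, mul (mul a b) c = mul a (mul b c))
    (hGP : ∀ a b c : A, br (mul a b) c =
      mul a (br b c) + mul (br a c) b + mul (mul a b) (D c))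
    (hmul_br : ∀ a b c : A, mul a (br b c) = mul (mul a c) (D b) - mul (mul a b) (D c))
    (a b c : A) :
    br (mul a b) c = mul (mul (D a) b) c + mul (mul a (D b)) c - mul (mul a b) (D c) := by
  have hright_comm := mul_mul_right_comm_of_comm_assoc hcomm hassoc
  rw [hGP, hmul_br, hcomm (br a c), hmul_br, hcomm b a, hcomm (D a), hright_comm b (D a),
    hright_comm a (D b)]
  abel

end

theorem stmt_0_general (F : Type*) [Field F] [CharZero F]
    (A : Type*) [AddCommGroup A] [Module F A]
    (mul br : A →ₗ[F] A →ₗ[F] A) (D : A →ₗ[F] A)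
    (hcomm : ∀ a b : A, mul a b = mul b a)
    (hassoc : ∀ a b c : A, mul (mul a b) c = mul a (mul b c))
    (hanti : ∀ a b : A, br a b = - br b a)
    (hGP : ∀ a b c : A, br (mul a b) c =
      mul a (br b c) + mul (br a c) b + mul (mul a b) (D c))
    (hTP : ∀ a b c : A, (2 : F) • mul a (br b c) = br (mul a b) c + br b (mul a c))
    :
    (∀ a b c : A, mul a (br b c) = mul (mul a (D b)) c - mul (mul a b) (D c)) ∧
    (∀ a b c : A, br (mul a b) c =
      mul (mul (D a) b) c + mul (mul a (D b)) c - mul (mul a b) (D c)) := by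
  have := IsAddTorsionFree.of_isTorsionFree F A
  have hmul_br := mul_br_eq hcomm hanti hGP hTP
  refine ⟨fun a b c => ?_, br_mul_eq hcomm hassoc hGP hmul_br⟩
  rw [hmul_br, mul_mul_right_comm_of_comm_assoc hcomm hassoc a (D b)]

theorem stmt_0 (F : Type*) [Field F] [CharZero F]
    (A : Type*) [AddCommGroup A] [Module F A]
    (mul br : A →ₗ[F] A →ₗ[F] A) (D : A →ₗ[F] A)
    (hcomm : ∀ a b : A, mul a b = mul b a)
    (hassoc : ∀ a b c : A, mul (mul a b) c = mul a (mul b c))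
    (hanti : ∀ a b : A, br a b = - br b a)
    (hjac : ∀ a b c : A, br (br a b) c + br (br b c) a + br (br c a) b = 0)
    (hDmul : ∀ a b : A, D (mul a b) = mul (D a) b + mul a (D b))
    (hDbr : ∀ a b : A, D (br a b) = br (D a) b + br a (D b))
    (hGP : ∀ a b c : A, br (mul a b) c =
      mul a (br b c) + mul (br a c) b + mul (mul a b) (D c))
    (hTP : ∀ a b c : A, (2 : F) • mul a (br b c) = br (mul a b) c + br b (mul a c))
    :
    (∀ a b c : A, mul a (br b c) = mul (mul a (D b)) c - mul (mul a b) (D c)) ∧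
    (∀ a b c : A, br (mul a b) c =
      mul (mul (D a) b) c + mul (mul a (D b)) c - mul (mul a b) (D c)) :=
  stmt_0_general F A mul br D hcomm hassoc hanti hGP hTP
end

section
/- Let F be a field of characteristic 0 and let A be an F-vector space equipped with a commutative associative bilinear product ·, a Lie bracket [,], and an F-linear map D : A → A that is a derivation of both products (D(a·b) = D(a)·b + a·D(b) and D([a,b]) = [D(a),b] + [a,D(b)]). If a·[b,c] = a·D(b)·c − a·b·D(c) and [a·b,c] = D(a)·b·c + a·D(b)·c − a·b·D(c) hold for all a,b,c ∈ A, then (A,·,[,],D) satisfies both the generalized Poisson compatibility identity [a·b,c] = a·[b,c] + [a,c]·b + a·b·D(c) and the transposed Poisson compatibility identity 2 a·[b,c] = [a·b,c] + [b,a·c] for all a,b,c ∈ A. -/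
/-!
Both identities are linear consequences of the two hypotheses expressing `a·[b,c]` and `[a·b,c]`
through `D`: expand every product with a bracket by them and cancel with commutativity and
associativity. In the transposed identity the factor `2` appears because `[b,a·c] = -[a·c,b]`
contributes `a·c·D(b) = a·D(b)·c` and `-a·D(c)·b = -a·b·D(c)` a second time.
-/

section

variable {R A : Type*} [CommSemiring R] [AddCommGroup A] [Module R A]
  (mul br : A →ₗ[R] A →ₗ[R] A) (D : A →ₗ[R] A)

theorem generalized_poisson_rule
    (hcomm : ∀ a b : A, mul a b = mul b a)
    (hid1 : ∀ a b c : A, mul a (br b c) = mul (mul a (D b)) c - mul (mul a b) (D c))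
    (hid2 : ∀ a b c : A, br (mul a b) c =
      mul (mul (D a) b) c + mul (mul a (D b)) c - mul (mul a b) (D c))
    (a b c : A) :
    br (mul a b) c = mul a (br b c) + mul (br a c) b + mul (mul a b) (D c) := by
  rw [hid2, hid1, hcomm (br a c) b, hid1 b a c, hcomm b (D a), hcomm b a]
  abel

theorem transposed_poisson_rule
    (hcomm : ∀ a b : A, mul a b = mul b a)
    (hassoc : ∀ a b c : A, mul (mul a b) c = mul a (mul b c))
    (hanti : ∀ a b : A, br a b = - br b a)
    (hid1 : ∀ a b c : A, mul a (br b c) = mul (mul a (D b)) c - mul (mul a b) (D c))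
    (hid2 : ∀ a b c : A, br (mul a b) c =
      mul (mul (D a) b) c + mul (mul a (D b)) c - mul (mul a b) (D c))
    (a b c : A) :
    (2 : R) • mul a (br b c) = br (mul a b) c + br b (mul a c) := by
  have mul_right_comm (x y z : A) : mul (mul x y) z = mul (mul x z) y := by
    rw [hassoc, hcomm y z, ← hassoc]
  rw [two_smul, hid1, hid2, hanti b (mul a c), hid2 a c b, mul_right_comm (D a) c b,
    mul_right_comm a (D c) b, mul_right_comm a c (D b)]
  abel

end

theorem stmt_1_general (F : Type*) [Field F]
    (A : Type*) [AddCommGroup A] [Module F A]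
    (mul br : A →ₗ[F] A →ₗ[F] A) (D : A →ₗ[F] A)
    (hcomm : ∀ a b : A, mul a b = mul b a)
    (hassoc : ∀ a b c : A, mul (mul a b) c = mul a (mul b c))
    (hanti : ∀ a b : A, br a b = - br b a)
    (hid1 : ∀ a b c : A, mul a (br b c) = mul (mul a (D b)) c - mul (mul a b) (D c))
    (hid2 : ∀ a b c : A, br (mul a b) c =
      mul (mul (D a) b) c + mul (mul a (D b)) c - mul (mul a b) (D c)) :
    (∀ a b c : A, br (mul a b) c =
      mul a (br b c) + mul (br a c) b + mul (mul a b) (D c)) ∧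
    (∀ a b c : A, (2 : F) • mul a (br b c) = br (mul a b) c + br b (mul a c)) :=
  ⟨generalized_poisson_rule mul br D hcomm hid1 hid2,
    transposed_poisson_rule mul br D hcomm hassoc hanti hid1 hid2⟩

theorem stmt_1 (F : Type*) [Field F] [CharZero F]
    (A : Type*) [AddCommGroup A] [Module F A]
    (mul br : A →ₗ[F] A →ₗ[F] A) (D : A →ₗ[F] A)
    (hcomm : ∀ a b : A, mul a b = mul b a)
    (hassoc : ∀ a b c : A, mul (mul a b) c = mul a (mul b c))
    (hanti : ∀ a b : A, br a b = - br b a)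
    (hjac : ∀ a b c : A, br (br a b) c + br (br b c) a + br (br c a) b = 0)
    (hDmul : ∀ a b : A, D (mul a b) = mul (D a) b + mul a (D b))
    (hDbr : ∀ a b : A, D (br a b) = br (D a) b + br a (D b))
    (hid1 : ∀ a b c : A, mul a (br b c) = mul (mul a (D b)) c - mul (mul a b) (D c))
    (hid2 : ∀ a b c : A, br (mul a b) c =
      mul (mul (D a) b) c + mul (mul a (D b)) c - mul (mul a b) (D c)) :
    (∀ a b c : A, br (mul a b) c =
      mul a (br b c) + mul (br a c) b + mul (mul a b) (D c)) ∧
    (∀ a b c : A, (2 : F) • mul a (br b c) = br (mul a b) c + br b (mul a c)) :=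
  stmt_1_general F A mul br D hcomm hassoc hanti hid1 hid2
end

section
/- Let F be a field of characteristic 0, let (A,·) be a commutative associative F-algebra, and let D : A → A be an F-linear derivation (D(a·b) = D(a)·b + a·D(b)). Define [a,b] = D(a)·b − a·D(b) for all a,b ∈ A. Then: (i) [,] is bilinear, antisymmetric, and satisfies the Jacobi identity [[a,b],c] + [[b,c],a] + [[c,a],b] = 0; (ii) D is a derivation of the bracket, D([a,b]) = [D(a),b] + [a,D(b)]; (iii) the generalized Poisson compatibility identity [a·b,c] = a·[b,c] + [a,c]·b + a·b·D(c) holds for all a,b,c ∈ A; and (iv) the transposed Poisson compatibility identity 2 a·[b,c] = [a·b,c] + [b,a·c] holds for all a,b,c ∈ A. -/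
/-!
Every identity is a polynomial identity in `a, b, c` and their images under `D` and `D²`, so it
follows by expanding with the Leibniz rule and normalising products with commutativity and
associativity. The one structural fact is that the first-order terms cancel in
`D [a, b] = D² a · b - a · D² b`; this gives both the derivation property of `D` and, after
cyclic summation, the Jacobi identity.
-/

section DerivBracket

variable {R A : Type*} [CommSemiring R] [AddCommGroup A] [Module R A]
  (mul : A →ₗ[R] A →ₗ[R] A) (D : A →ₗ[R] A)

def derivBracket : A →ₗ[R] A →ₗ[R] A :=
  mul ∘ₗ D - mul.compl₂ D

@[simp]
theorem derivBracket_apply (a b : A) :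
    derivBracket mul D a b = mul (D a) b - mul a (D b) :=
  rfl

theorem mul_left_comm_of_comm_of_assoc (hcomm : ∀ a b : A, mul a b = mul b a)
    (hassoc : ∀ a b c : A, mul (mul a b) c = mul a (mul b c)) (a b c : A) :
    mul a (mul b c) = mul b (mul a c) := by
  rw [← hassoc, hcomm a b, hassoc]

theorem derivBracket_swap (hcomm : ∀ a b : A, mul a b = mul b a) (a b : A) :
    derivBracket mul D a b = -derivBracket mul D b a := by
  simp only [derivBracket_apply, hcomm a (D b), hcomm (D a) b, neg_sub]

theorem map_derivBracket_eq (hDmul : ∀ a b : A, D (mul a b) = mul (D a) b + mul a (D b))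
    (a b : A) :
    D (derivBracket mul D a b) = mul (D (D a)) b - mul a (D (D b)) := by
  simp only [derivBracket_apply, map_sub, hDmul]
  abel

theorem map_derivBracket (hDmul : ∀ a b : A, D (mul a b) = mul (D a) b + mul a (D b))
    (a b : A) :
    D (derivBracket mul D a b) = derivBracket mul D (D a) b + derivBracket mul D a (D b) := by
  rw [map_derivBracket_eq mul D hDmul]
  simp only [derivBracket_apply]
  abel

theorem derivBracket_jacobi (hcomm : ∀ a b : A, mul a b = mul b a)
    (hassoc : ∀ a b c : A, mul (mul a b) c = mul a (mul b c))
    (hDmul : ∀ a b : A, D (mul a b) = mul (D a) b + mul a (D b)) (a b c : A) :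
    derivBracket mul D (derivBracket mul D a b) c + derivBracket mul D (derivBracket mul D b c) a
      + derivBracket mul D (derivBracket mul D c a) b = 0 := by
  have hlc := mul_left_comm_of_comm_of_assoc mul hcomm hassoc
  simp only [derivBracket_apply _ _ (derivBracket mul D _ _), map_derivBracket_eq mul D hDmul]
  simp only [derivBracket_apply, map_sub, LinearMap.sub_apply, hassoc, hcomm, hlc]
  abel

theorem derivBracket_mul_left (hcomm : ∀ a b : A, mul a b = mul b a)
    (hassoc : ∀ a b c : A, mul (mul a b) c = mul a (mul b c))
    (hDmul : ∀ a b : A, D (mul a b) = mul (D a) b + mul a (D b)) (a b c : A) :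
    derivBracket mul D (mul a b) c =
      mul a (derivBracket mul D b c) + mul (derivBracket mul D a c) b + mul (mul a b) (D c) := by
  have hlc := mul_left_comm_of_comm_of_assoc mul hcomm hassoc
  simp only [derivBracket_apply, hDmul, map_add, map_sub, LinearMap.add_apply, LinearMap.sub_apply,
    hassoc, hcomm, hlc]
  abel

theorem two_smul_mul_derivBracket (hcomm : ∀ a b : A, mul a b = mul b a)
    (hassoc : ∀ a b c : A, mul (mul a b) c = mul a (mul b c))
    (hDmul : ∀ a b : A, D (mul a b) = mul (D a) b + mul a (D b)) (a b c : A) :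
    (2 : R) • mul a (derivBracket mul D b c) =
      derivBracket mul D (mul a b) c + derivBracket mul D b (mul a c) := by
  have hlc := mul_left_comm_of_comm_of_assoc mul hcomm hassoc
  simp only [derivBracket_apply, hDmul, two_smul, map_add, map_sub, LinearMap.add_apply, hassoc,
    hcomm, hlc]
  abel

end DerivBracket

theorem stmt_2_general (F : Type*) [Field F]
    (A : Type*) [AddCommGroup A] [Module F A]
    (mul : A →ₗ[F] A →ₗ[F] A) (D : A →ₗ[F] A)
    (hcomm : ∀ a b : A, mul a b = mul b a)
    (hassoc : ∀ a b c : A, mul (mul a b) c = mul a (mul b c))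
    (hDmul : ∀ a b : A, D (mul a b) = mul (D a) b + mul a (D b))
    (br : A → A → A)
    (hbr : ∀ a b : A, br a b = mul (D a) b - mul a (D b)) :
    (∀ a b c : A, br (a + b) c = br a c + br b c) ∧
    (∀ (t : F) (a b : A), br (t • a) b = t • br a b) ∧
    (∀ a b c : A, br a (b + c) = br a b + br a c) ∧
    (∀ (t : F) (a b : A), br a (t • b) = t • br a b) ∧
    (∀ a b : A, br a b = - br b a) ∧
    (∀ a b c : A, br (br a b) c + br (br b c) a + br (br c a) b = 0) ∧
    (∀ a b : A, D (br a b) = br (D a) b + br a (D b)) ∧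
    (∀ a b c : A, br (mul a b) c =
      mul a (br b c) + mul (br a c) b + mul (mul a b) (D c)) ∧
    (∀ a b c : A, (2 : F) • mul a (br b c) = br (mul a b) c + br b (mul a c)) := by
  obtain rfl : br = fun a b => derivBracket mul D a b := funext₂ hbr
  exact ⟨fun a b c => LinearMap.map_add₂ _ a b c, fun t a b => LinearMap.map_smul₂ _ t a b,
    fun a b c => map_add _ b c, fun t a b => map_smul _ t b,
    derivBracket_swap mul D hcomm,
    derivBracket_jacobi mul D hcomm hassoc hDmul,
    map_derivBracket mul D hDmul,
    derivBracket_mul_left mul D hcomm hassoc hDmul,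
    two_smul_mul_derivBracket mul D hcomm hassoc hDmul⟩

theorem stmt_2 (F : Type*) [Field F] [CharZero F]
    (A : Type*) [AddCommGroup A] [Module F A]
    (mul : A →ₗ[F] A →ₗ[F] A) (D : A →ₗ[F] A)
    (hcomm : ∀ a b : A, mul a b = mul b a)
    (hassoc : ∀ a b c : A, mul (mul a b) c = mul a (mul b c))
    (hDmul : ∀ a b : A, D (mul a b) = mul (D a) b + mul a (D b))
    (br : A → A → A)
    (hbr : ∀ a b : A, br a b = mul (D a) b - mul a (D b)) :
    (∀ a b c : A, br (a + b) c = br a c + br b c) ∧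
    (∀ (t : F) (a b : A), br (t • a) b = t • br a b) ∧
    (∀ a b c : A, br a (b + c) = br a b + br a c) ∧
    (∀ (t : F) (a b : A), br a (t • b) = t • br a b) ∧
    (∀ a b : A, br a b = - br b a) ∧
    (∀ a b c : A, br (br a b) c + br (br b c) a + br (br c a) b = 0) ∧
    (∀ a b : A, D (br a b) = br (D a) b + br a (D b)) ∧
    (∀ a b c : A, br (mul a b) c =
      mul a (br b c) + mul (br a c) b + mul (mul a b) (D c)) ∧
    (∀ a b c : A, (2 : F) • mul a (br b c) = br (mul a b) c + br b (mul a c)) :=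
  stmt_2_general F A mul D hcomm hassoc hDmul br hbr
end

section
/- Let F be a field of characteristic 0, let A be a Zinbiel algebra over F (a vector space with bilinear multiplication (a,b) ↦ ab satisfying (ab + ba)c = a(bc) for all a,b,c), and let D : A → A be an F-linear derivation (D(ab) = D(a)b + aD(b)). Define a ⋆ b = D(a)b − aD(b). Then (A,⋆) is a left-symmetric algebra, i.e., (a⋆b)⋆c − a⋆(b⋆c) = (b⋆a)⋆c − b⋆(a⋆c) holds for all a,b,c ∈ A. -/
/-!
Expanding with the Leibniz rule, the associator of `a ⋆ b = D(a)b − aD(b)` consists of terms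
`(xy)z` and `x(yz)`; the Zinbiel identity rewrites each `x(yz)` as `(xy + yx)z`, and the
resulting expression is visibly symmetric in `a` and `b`.
-/

namespace ZinbielDerivation

variable {R A : Type*} [CommSemiring R] [AddCommGroup A] [Module R A]
  (mul : A →ₗ[R] A →ₗ[R] A) (D : A →ₗ[R] A)

def derivStar (a b : A) : A :=
  mul (D a) b - mul a (D b)

variable {mul D}

lemma derivStar_derivStar_left (hD : ∀ a b : A, D (mul a b) = mul (D a) b + mul a (D b))
    (a b c : A) :
    derivStar mul D (derivStar mul D a b) c
      = mul (mul (D (D a)) b) c - mul (mul a (D (D b))) c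
        - mul (mul (D a) b) (D c) + mul (mul a (D b)) (D c) := by
  simp only [derivStar, map_sub, LinearMap.sub_apply, hD, map_add, LinearMap.add_apply]
  abel

lemma derivStar_derivStar_right (hD : ∀ a b : A, D (mul a b) = mul (D a) b + mul a (D b))
    (a b c : A) :
    derivStar mul D a (derivStar mul D b c)
      = mul (D a) (mul (D b) c) - mul (D a) (mul b (D c))
        - mul a (mul (D (D b)) c) + mul a (mul b (D (D c))) := by
  simp only [derivStar, map_sub, hD, map_add]
  abel

lemma derivStar_associator (hzin : ∀ a b c : A, mul (mul a b + mul b a) c = mul a (mul b c))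
    (hD : ∀ a b : A, D (mul a b) = mul (D a) b + mul a (D b)) (a b c : A) :
    derivStar mul D (derivStar mul D a b) c - derivStar mul D a (derivStar mul D b c)
      = mul (mul (D (D a)) b) c + mul (mul (D (D b)) a) c
        + mul (mul a (D b)) (D c) + mul (mul b (D a)) (D c)
        - mul (mul (D a) (D b) + mul (D b) (D a)) c - mul (mul a b + mul b a) (D (D c)) := by
  rw [derivStar_derivStar_left hD, derivStar_derivStar_right hD, ← hzin (D a), ← hzin (D a),
    ← hzin a, ← hzin a]
  simp only [map_add, LinearMap.add_apply]
  abel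

theorem derivStar_leftSymmetric
    (hzin : ∀ a b c : A, mul (mul a b + mul b a) c = mul a (mul b c))
    (hD : ∀ a b : A, D (mul a b) = mul (D a) b + mul a (D b)) (a b c : A) :
    derivStar mul D (derivStar mul D a b) c - derivStar mul D a (derivStar mul D b c)
      = derivStar mul D (derivStar mul D b a) c - derivStar mul D b (derivStar mul D a c) := by
  rw [derivStar_associator hzin hD, derivStar_associator hzin hD,
    add_comm (mul (D b) (D a)), add_comm (mul b a)]
  abel

end ZinbielDerivation

theorem stmt_3_general (F : Type*) [Field F]
    (A : Type*) [AddCommGroup A] [Module F A]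
    (mul : A →ₗ[F] A →ₗ[F] A)
    (hzin : ∀ a b c : A, mul (mul a b + mul b a) c = mul a (mul b c))
    (D : A →ₗ[F] A)
    (hDmul : ∀ a b : A, D (mul a b) = mul (D a) b + mul a (D b))
    (star : A → A → A)
    (hstar : ∀ a b : A, star a b = mul (D a) b - mul a (D b)) :
    ∀ a b c : A, star (star a b) c - star a (star b c)
      = star (star b a) c - star b (star a c) := by
  obtain rfl : star = ZinbielDerivation.derivStar mul D := funext₂ hstar
  exact ZinbielDerivation.derivStar_leftSymmetric hzin hDmul

theorem stmt_3 (F : Type*) [Field F] [CharZero F]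
    (A : Type*) [AddCommGroup A] [Module F A]
    (mul : A →ₗ[F] A →ₗ[F] A)
    (hzin : ∀ a b c : A, mul (mul a b + mul b a) c = mul a (mul b c))
    (D : A →ₗ[F] A)
    (hDmul : ∀ a b : A, D (mul a b) = mul (D a) b + mul a (D b))
    (star : A → A → A)
    (hstar : ∀ a b : A, star a b = mul (D a) b - mul a (D b)) :
    ∀ a b c : A, star (star a b) c - star a (star b c)
      = star (star b a) c - star b (star a c) :=
  stmt_3_general F A mul hzin D hDmul star hstar
end

section
/- Let F be a field of characteristic 0 and let A be an F-vector space with a bilinear multiplication ⋆ and an F-linear map D : A → A that is a derivation of ⋆ (D(a⋆b) = D(a)⋆b + a⋆D(b)). Suppose that for all a,b,c ∈ A the identity 3((a⋆b)⋆c − a⋆(b⋆c)) = (a⋆c)⋆b + (b⋆c)⋆a − (b⋆a)⋆c − (c⋆a)⋆b + 4(a·b)·D(c) + 2D(a)·(b·c) holds, where a·b = (1/2)(a⋆b + b⋆a). Then, setting [a,b] = (1/2)(a⋆b − b⋆a), the polarization (A,·,[,],D) is a generalized Poisson algebra: · is commutative and associative, [,] is antisymmetric and satisfies the Jacobi identity,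 D is a derivation of both · and [,], and [a·b,c] = a·[b,c] + [a,c]·b + a·b·D(c) holds for all a,b,c ∈ A. -/
/-!
Commutativity of `·`, antisymmetry of `[,]` and the derivation property of `D` are formal. The
other three properties are linear consequences of the defining identity: its alternating sum
over the six permutations of `(a, b, c)` kills the `D`-terms (they are symmetric in two
arguments) and shows that `⋆` is Lie-admissible, which is the Jacobi identity for the commutator;
suitable signed sums of four or six of its instances give associativity of `·` and the
generalized Leibniz rule. The coefficients involve `1/12`, hence characteristic zero.
-/

namespace LinearMap

variable {F A : Type*} [Field F] [AddCommGroup A] [Module F A] (μ : A →ₗ[F] A →ₗ[F] A)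

def polarMul (a b : A) : A := (2 : F)⁻¹ • (μ a b + μ b a)

def polarBracket (a b : A) : A := (2 : F)⁻¹ • (μ a b - μ b a)

def associator (a b c : A) : A := μ (μ a b) c - μ a (μ b c)

def IsLieAdmissible : Prop :=
  ∀ a b c : A, μ.associator a b c - μ.associator a c b - μ.associator b a c
    + μ.associator b c a + μ.associator c a b - μ.associator c b a = 0

def IsGenPoissonAdmissible (D : A →ₗ[F] A) : Prop :=
  ∀ a b c : A, (3 : F) • μ.associator a b c =
    μ (μ a c) b + μ (μ b c) a - μ (μ b a) c - μ (μ c a) b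
      + (4 : F) • μ.polarMul (μ.polarMul a b) (D c) + (2 : F) • μ.polarMul (D a) (μ.polarMul b c)

theorem polarMul_comm (a b : A) : μ.polarMul a b = μ.polarMul b a := by
  rw [polarMul, polarMul, add_comm]

theorem polarBracket_anticomm (a b : A) : μ.polarBracket a b = -μ.polarBracket b a := by
  rw [polarBracket, polarBracket, ← smul_neg, neg_sub]

variable {μ}

theorem map_polarMul {D : A →ₗ[F] A} (hD : ∀ a b, D (μ a b) = μ (D a) b + μ a (D b)) (a b : A) :
    D (μ.polarMul a b) = μ.polarMul (D a) b + μ.polarMul a (D b) := by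
  simp only [polarMul, map_smul, map_add, hD]
  module

theorem map_polarBracket {D : A →ₗ[F] A} (hD : ∀ a b, D (μ a b) = μ (D a) b + μ a (D b))
    (a b : A) : D (μ.polarBracket a b) = μ.polarBracket (D a) b + μ.polarBracket a (D b) := by
  simp only [polarBracket, map_smul, map_sub, hD]
  module

theorem IsLieAdmissible.polarBracket_jacobi (h : μ.IsLieAdmissible) (a b c : A) :
    μ.polarBracket (μ.polarBracket a b) c + μ.polarBracket (μ.polarBracket b c) a
      + μ.polarBracket (μ.polarBracket c a) b = 0 := by
  have := h a b c
  simp only [associator] at this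
  simp only [polarBracket, map_smul, map_sub, smul_apply, sub_apply]
  linear_combination (norm := module) ((2 : F)⁻¹ * (2 : F)⁻¹) • this

namespace IsGenPoissonAdmissible

variable {D : A →ₗ[F] A} [CharZero F]

theorem isLieAdmissible (h : μ.IsGenPoissonAdmissible D) : μ.IsLieAdmissible := by
  intro a b c
  have h1 := h a b c
  have h2 := h a c b
  have h3 := h b a c
  have h4 := h b c a
  have h5 := h c a b
  have h6 := h c b a
  simp only [associator, polarMul, map_add, map_smul, add_apply, smul_apply] at h1 h2 h3 h4 h5 h6 ⊢
  linear_combination (norm := module)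
    (3 : F)⁻¹ • (h1 - h2 - h3 + h4 + h5 - h6)

theorem polarMul_assoc (h : μ.IsGenPoissonAdmissible D) (a b c : A) :
    μ.polarMul (μ.polarMul a b) c = μ.polarMul a (μ.polarMul b c) := by
  have h1 := h a b c
  have h2 := h a c b
  have h5 := h c a b
  have h6 := h c b a
  simp only [associator, polarMul, map_add, map_smul, add_apply, smul_apply] at h1 h2 h5 h6 ⊢
  linear_combination (norm := module) (12 : F)⁻¹ • (h1 + h2 - h5 - h6)

theorem polarBracket_polarMul (h : μ.IsGenPoissonAdmissible D) (a b c : A) :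
    μ.polarBracket (μ.polarMul a b) c = μ.polarMul a (μ.polarBracket b c)
      + μ.polarMul (μ.polarBracket a c) b + μ.polarMul (μ.polarMul a b) (D c) := by
  have h1 := h a b c
  have h2 := h a c b
  have h3 := h b a c
  have h4 := h b c a
  have h5 := h c a b
  have h6 := h c b a
  simp only [associator, polarMul, polarBracket, map_add, map_sub, map_smul, add_apply, sub_apply,
    smul_apply] at h1 h2 h3 h4 h5 h6 ⊢
  linear_combination (norm := module) (12 : F)⁻¹ • (h1 - h2 + h3 - h4 + h5 + h6)

end IsGenPoissonAdmissible

end LinearMap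

theorem stmt_5 (F : Type*) [Field F] [CharZero F]
    (A : Type*) [AddCommGroup A] [Module F A]
    (star : A →ₗ[F] A →ₗ[F] A) (D : A →ₗ[F] A)
    (hDstar : ∀ a b : A, D (star a b) = star (D a) b + star a (D b))
    (cdot lb : A → A → A)
    (hcdot : ∀ a b : A, cdot a b = (2 : F)⁻¹ • (star a b + star b a))
    (hlb : ∀ a b : A, lb a b = (2 : F)⁻¹ • (star a b - star b a))
    (hmain : ∀ a b c : A, (3 : F) • (star (star a b) c - star a (star b c)) =
      star (star a c) b + star (star b c) a - star (star b a) c - star (star c a) b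
      + (4 : F) • cdot (cdot a b) (D c) + (2 : F) • cdot (D a) (cdot b c)) :
    (∀ a b : A, cdot a b = cdot b a) ∧
    (∀ a b c : A, cdot (cdot a b) c = cdot a (cdot b c)) ∧
    (∀ a b : A, lb a b = - lb b a) ∧
    (∀ a b c : A, lb (lb a b) c + lb (lb b c) a + lb (lb c a) b = 0) ∧
    (∀ a b : A, D (cdot a b) = cdot (D a) b + cdot a (D b)) ∧
    (∀ a b : A, D (lb a b) = lb (D a) b + lb a (D b)) ∧
    (∀ a b c : A, lb (cdot a b) c =
      cdot a (lb b c) + cdot (lb a c) b + cdot (cdot a b) (D c)) := by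
  obtain rfl : cdot = star.polarMul := funext₂ hcdot
  obtain rfl : lb = star.polarBracket := funext₂ hlb
  have hadm : star.IsGenPoissonAdmissible D := hmain
  exact ⟨star.polarMul_comm, hadm.polarMul_assoc, star.polarBracket_anticomm,
    hadm.isLieAdmissible.polarBracket_jacobi, LinearMap.map_polarMul hDstar,
    LinearMap.map_polarBracket hDstar, hadm.polarBracket_polarMul⟩
end

section
/- Let F be a field of characteristic 0 and let (A,·,[,],D) be a generalized Poisson algebra over F: · is commutative and associative, [,] is a Lie bracket, D is an F-linear derivation of both products, and [a·b,c] = a·[b,c] + [a,c]·b + a·b·D(c) for all a,b,c. Define a ⋆ b = a·b + [a,b]. Then for all a,b,c ∈ A the identity 3((a⋆b)⋆c − a⋆(b⋆c)) = (a⋆c)⋆b + (b⋆c)⋆a − (b⋆a)⋆c − (c⋆a)⋆b + 4(a·b)·D(c) + 2D(a)·(b·c) holds. -/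
/-!
The depolarized product `a ⋆ b = a·b + [a,b]` has associator
`(a⋆b)⋆c − a⋆(b⋆c) = (a·b)·D(c) + (b·c)·D(a) + [[a,c],b]`: the generalized Leibniz rule
expands `[a·b,c]` and `[a,b·c]` so that all the mixed terms `a·[b,c]` cancel, and Jacobi turns
the remaining double brackets into one. Together with `x⋆y − y⋆x = 2[x,y]`, this rewrites the
four products on the right-hand side as `3[[a,c],b] + (b·c)·D(a) − (a·b)·D(c)` plus associators,
and the identity follows by comparing coefficients.
-/

section GeneralizedPoisson

variable {R A : Type*} [CommRing R] [AddCommGroup A] [Module R A]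
  (mul br : A →ₗ[R] A →ₗ[R] A) (D : A →ₗ[R] A)

local notation:70 x:70 " ⋆ " y:71 => (mul + br) x y

theorem br_mul_right (hanti : ∀ a b : A, br a b = - br b a)
    (hGP : ∀ a b c : A, br (mul a b) c =
      mul a (br b c) + mul (br a c) b + mul (mul a b) (D c))
    (x y z : A) :
    br x (mul y z) = mul y (br x z) + mul (br x y) z - mul (mul y z) (D x) := by
  rw [hanti, hGP, hanti z x, hanti y x]
  simp only [map_neg, LinearMap.neg_apply]
  abel

theorem br_br_sub_br_br (hanti : ∀ a b : A, br a b = - br b a)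
    (hjac : ∀ a b c : A, br (br a b) c + br (br b c) a + br (br c a) b = 0) (x y z : A) :
    br (br x y) z - br x (br y z) = br (br x z) y := by
  have h := hjac x y z
  rw [hanti z x, map_neg, LinearMap.neg_apply] at h
  linear_combination (norm := module) h - hanti x (br y z)

theorem depol_sub_depol_swap (hcomm : ∀ a b : A, mul a b = mul b a)
    (hanti : ∀ a b : A, br a b = - br b a) (x y : A) :
    x ⋆ y - y ⋆ x = (2 : R) • br x y := by
  simp only [LinearMap.add_apply]
  rw [hcomm y x, hanti y x]
  module

theorem depol_associator (hcomm : ∀ a b : A, mul a b = mul b a)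
    (hassoc : ∀ a b c : A, mul (mul a b) c = mul a (mul b c))
    (hanti : ∀ a b : A, br a b = - br b a)
    (hjac : ∀ a b c : A, br (br a b) c + br (br b c) a + br (br c a) b = 0)
    (hGP : ∀ a b c : A, br (mul a b) c =
      mul a (br b c) + mul (br a c) b + mul (mul a b) (D c))
    (x y z : A) :
    (x ⋆ y) ⋆ z - x ⋆ (y ⋆ z) = mul (mul x y) (D z) + mul (mul y z) (D x) + br (br x z) y := by
  have hbr := br_br_sub_br_br br hanti hjac x y z
  simp only [LinearMap.add_apply, map_add, hGP, br_mul_right mul br D hanti hGP, hassoc,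
    hcomm (br x z) y]
  linear_combination (norm := module) hbr

theorem depol_depol_combination (hcomm : ∀ a b : A, mul a b = mul b a)
    (hassoc : ∀ a b c : A, mul (mul a b) c = mul a (mul b c))
    (hanti : ∀ a b : A, br a b = - br b a)
    (hjac : ∀ a b c : A, br (br a b) c + br (br b c) a + br (br c a) b = 0)
    (hGP : ∀ a b c : A, br (mul a b) c =
      mul a (br b c) + mul (br a c) b + mul (mul a b) (D c))
    (x y z : A) :
    (x ⋆ z) ⋆ y + (y ⋆ z) ⋆ x - (y ⋆ x) ⋆ z - (z ⋆ x) ⋆ y =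
      (3 : R) • br (br x z) y + mul (mul y z) (D x) - mul (mul x y) (D z) := by
  have hswap := depol_sub_depol_swap mul br hcomm hanti
  have hassociator := depol_associator mul br D hcomm hassoc hanti hjac hGP
  have hbr := br_br_sub_br_br br hanti hjac y x z
  calc (x ⋆ z) ⋆ y + (y ⋆ z) ⋆ x - (y ⋆ x) ⋆ z - (z ⋆ x) ⋆ y
      = (x ⋆ z - z ⋆ x) ⋆ y - y ⋆ (x ⋆ z - z ⋆ x)
          + ((y ⋆ z) ⋆ x - y ⋆ (z ⋆ x)) - ((y ⋆ x) ⋆ z - y ⋆ (x ⋆ z)) := by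
        simp only [map_sub, LinearMap.sub_apply]
        abel
    _ = (2 : R) • (br x z ⋆ y - y ⋆ br x z)
          + ((y ⋆ z) ⋆ x - y ⋆ (z ⋆ x)) - ((y ⋆ x) ⋆ z - y ⋆ (x ⋆ z)) := by
        rw [hswap x z]
        simp only [map_smul, LinearMap.smul_apply, smul_sub]
    _ = (2 : R) • (2 : R) • br (br x z) y
          + (mul (mul y z) (D x) + mul (mul z x) (D y) + br (br y x) z)
          - (mul (mul y x) (D z) + mul (mul x z) (D y) + br (br y z) x) := by
        rw [hswap, hassociator, hassociator]
    _ = (3 : R) • br (br x z) y + mul (mul y z) (D x) - mul (mul x y) (D z) := by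
        rw [hcomm z x, hcomm y x]
        linear_combination (norm := module) hbr + hanti y (br x z)

end GeneralizedPoisson

theorem stmt_6_general (F : Type*) [Field F]
    (A : Type*) [AddCommGroup A] [Module F A]
    (mul br : A →ₗ[F] A →ₗ[F] A) (D : A →ₗ[F] A)
    (hcomm : ∀ a b : A, mul a b = mul b a)
    (hassoc : ∀ a b c : A, mul (mul a b) c = mul a (mul b c))
    (hanti : ∀ a b : A, br a b = - br b a)
    (hjac : ∀ a b c : A, br (br a b) c + br (br b c) a + br (br c a) b = 0)
    (hGP : ∀ a b c : A, br (mul a b) c =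
      mul a (br b c) + mul (br a c) b + mul (mul a b) (D c))
    (star : A → A → A)
    (hstar : ∀ a b : A, star a b = mul a b + br a b) :
    ∀ a b c : A, (3 : F) • (star (star a b) c - star a (star b c)) =
      star (star a c) b + star (star b c) a - star (star b a) c - star (star c a) b
      + (4 : F) • mul (mul a b) (D c) + (2 : F) • mul (D a) (mul b c) := by
  intro a b c
  have hstar' : ∀ x y, star x y = (mul + br) x y := by simp [hstar]
  simp only [hstar']
  rw [depol_associator mul br D hcomm hassoc hanti hjac hGP,
    depol_depol_combination mul br D hcomm hassoc hanti hjac hGP, hcomm (D a)]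
  module

theorem stmt_6 (F : Type*) [Field F] [CharZero F]
    (A : Type*) [AddCommGroup A] [Module F A]
    (mul br : A →ₗ[F] A →ₗ[F] A) (D : A →ₗ[F] A)
    (hcomm : ∀ a b : A, mul a b = mul b a)
    (hassoc : ∀ a b c : A, mul (mul a b) c = mul a (mul b c))
    (hanti : ∀ a b : A, br a b = - br b a)
    (hjac : ∀ a b c : A, br (br a b) c + br (br b c) a + br (br c a) b = 0)
    (hDmul : ∀ a b : A, D (mul a b) = mul (D a) b + mul a (D b))
    (hDbr : ∀ a b : A, D (br a b) = br (D a) b + br a (D b))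
    (hGP : ∀ a b c : A, br (mul a b) c =
      mul a (br b c) + mul (br a c) b + mul (mul a b) (D c))
    (star : A → A → A)
    (hstar : ∀ a b : A, star a b = mul a b + br a b) :
    ∀ a b c : A, (3 : F) • (star (star a b) c - star a (star b c)) =
      star (star a c) b + star (star b c) a - star (star b a) c - star (star c a) b
      + (4 : F) • mul (mul a b) (D c) + (2 : F) • mul (D a) (mul b c) :=
  stmt_6_general F A mul br D hcomm hassoc hanti hjac hGP star hstar
end

section
/- Let F be a field of characteristic 0 and let A be an F-vector space with a bilinear multiplication ⋆ and an F-linear map D : A → A. Suppose that for all a,b,c ∈ A the identities a⋆(b⋆c) − (c⋆b)⋆a − 2(b·c)·D(a) + 4(a·b)·D(c) = 0 and (a⋆b)⋆c − a⋆(b⋆c) − (1/2)(a⋆c)⋆b + (1/2)(c⋆a)⋆b − 2(a·b)·D(c) = 0 hold, where a·b = (1/2)(a⋆b + b⋆a). Then the commutative product · is associative: (a·b)·c = a·(b·c) for all a,b,c ∈ A. -/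
/-!
Identity `hid2` expresses `(a·b)·D c` through `⋆`, so adding `2 hid2 (a,b,c) - hid2 (b,c,a)` to
`hid1 (a,b,c)` cancels every term containing `D` and leaves a cubic identity of `⋆` alone
(`star_cubic_identity`). The associator of `·` is a combination of four permutations of it.
-/

section

variable {F A : Type*} [Field F] [CharZero F] [AddCommGroup A] [Module F A]

theorem star_cubic_identity (star : A →ₗ[F] A →ₗ[F] A) (D : A →ₗ[F] A) (cdot : A → A → A)
    (hid1 : ∀ a b c : A, star a (star b c) - star (star c b) a
      - (2 : F) • cdot (cdot b c) (D a) + (4 : F) • cdot (cdot a b) (D c) = 0)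
    (hid2 : ∀ a b c : A, star (star a b) c - star a (star b c)
      - (2 : F)⁻¹ • star (star a c) b + (2 : F)⁻¹ • star (star c a) b
      - (2 : F) • cdot (cdot a b) (D c) = 0)
    (a b c : A) :
    (3 : F) • star (star a b) c + star (star b a) c + (2 : F) • star (star c a) b
      - (2 : F) • star (star a c) b + (2 : F) • star b (star c a) - (2 : F) • star a (star b c)
      - (2 : F) • star (star b c) a - (2 : F) • star (star c b) a = 0 := by
  linear_combination (norm := module)
    (2 : F) • hid1 a b c - (2 : F) • hid2 b c a + (4 : F) • hid2 a b c

theorem cdot_assoc_of_star_cubic_identity (star : A →ₗ[F] A →ₗ[F] A) (cdot : A → A → A)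
    (hcdot : ∀ a b : A, cdot a b = (2 : F)⁻¹ • (star a b + star b a))
    (hcubic : ∀ a b c : A,
      (3 : F) • star (star a b) c + star (star b a) c + (2 : F) • star (star c a) b
        - (2 : F) • star (star a c) b + (2 : F) • star b (star c a) - (2 : F) • star a (star b c)
        - (2 : F) • star (star b c) a - (2 : F) • star (star c b) a = 0)
    (a b c : A) :
    cdot (cdot a b) c = cdot a (cdot b c) := by
  simp only [hcdot, map_add, map_smul, LinearMap.add_apply, LinearMap.smul_apply]
  linear_combination (norm := module)
    (24 : F)⁻¹ • hcubic a c b - (12 : F)⁻¹ • hcubic b a c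
      - (8 : F)⁻¹ • hcubic c a b - (12 : F)⁻¹ • hcubic c b a

end

theorem stmt_7 (F : Type*) [Field F] [CharZero F]
    (A : Type*) [AddCommGroup A] [Module F A]
    (star : A →ₗ[F] A →ₗ[F] A) (D : A →ₗ[F] A)
    (cdot : A → A → A)
    (hcdot : ∀ a b : A, cdot a b = (2 : F)⁻¹ • (star a b + star b a))
    (hid1 : ∀ a b c : A, star a (star b c) - star (star c b) a
      - (2 : F) • cdot (cdot b c) (D a) + (4 : F) • cdot (cdot a b) (D c) = 0)
    (hid2 : ∀ a b c : A, star (star a b) c - star a (star b c)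
      - (2 : F)⁻¹ • star (star a c) b + (2 : F)⁻¹ • star (star c a) b
      - (2 : F) • cdot (cdot a b) (D c) = 0)
    :
    ∀ a b c : A, cdot (cdot a b) c = cdot a (cdot b c) :=
  cdot_assoc_of_star_cubic_identity star cdot hcdot (star_cubic_identity star D cdot hid1 hid2)
end

section
/- Let F be a field of characteristic 0 and let A be an F-vector space with a bilinear multiplication ⋆ and an F-linear map D : A → A. Suppose that for all a,b,c ∈ A the identities a⋆(b⋆c) − (c⋆b)⋆a − 2(b·c)·D(a) + 4(a·b)·D(c) = 0 and (a⋆b)⋆c − a⋆(b⋆c) − (1/2)(a⋆c)⋆b + (1/2)(c⋆a)⋆b − 2(a·b)·D(c) = 0 hold, where a·b = (1/2)(a⋆b + b⋆a). Then the bracket [a,b] = (1/2)(a⋆b − b⋆a) satisfies the Jacobi identity [[a,b],c] + [[b,c],a] + [[c,a],b] = 0 for all a,b,c ∈ A. -/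
/-!
Alternate every identity over the six permutations of its arguments. The terms involving `D` die,
because each is symmetric in two of its arguments (the product `a·b` is commutative). Let `S` and
`T` be the alternating sums of `(x⋆y)⋆z` and `x⋆(y⋆z)`. The first identity becomes `S + T = 0`
and the second `T = 2S`, so `S = T = 0` in characteristic zero. Four times the Jacobiator of the
bracket is `S - T`, and the Jacobi identity follows.
-/

namespace LieAdmissible

section Alternation

variable {A : Type*} [AddCommGroup A] (f g : A → A → A → A) (a b c : A)

def alternation : A :=
  f a b c - f a c b - f b a c + f b c a + f c a b - f c b a

lemma alternation_add :
    alternation (fun x y z => f x y z + g x y z) a b c =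
      alternation f a b c + alternation g a b c := by
  simp only [alternation]; abel

lemma alternation_sub :
    alternation (fun x y z => f x y z - g x y z) a b c =
      alternation f a b c - alternation g a b c := by
  simp only [alternation]; abel

lemma alternation_smul {R : Type*} [Semiring R] [Module R A] (r : R) :
    alternation (fun x y z => r • f x y z) a b c = r • alternation f a b c := by
  simp only [alternation, smul_add, smul_sub]

lemma alternation_reverse :
    alternation (fun x y z => f z y x) a b c = -alternation f a b c := by
  simp only [alternation]; abel

lemma alternation_rotate :
    alternation (fun x y z => f z x y) a b c = alternation f a b c := by
  simp only [alternation]; abel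

lemma alternation_swap_last :
    alternation (fun x y z => f x z y) a b c = -alternation f a b c := by
  simp only [alternation]; abel

lemma alternation_eq_zero_of_forall_eq_zero (h : ∀ x y z, f x y z = 0) :
    alternation f a b c = 0 := by
  simp only [alternation, h, sub_zero, add_zero]

lemma alternation_eq_zero_of_comm_first (h : ∀ x y z, f x y z = f y x z) :
    alternation f a b c = 0 := by
  simp only [alternation, h b a c, h c a b, h c b a]; abel

lemma alternation_eq_zero_of_comm_last (h : ∀ x y z, f x y z = f x z y) :
    alternation f a b c = 0 := by
  simp only [alternation, h a c b, h b c a, h c b a]; abel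

end Alternation

variable {F A : Type*} [Field F] [AddCommGroup A] [Module F A] (a b c : A)

section Identities

variable (star cdot : A → A → A) (D : A → A)

lemma alternation_left_add_alternation_right_eq_zero (hcomm : ∀ x y, cdot x y = cdot y x)
    (hid1 : ∀ a b c : A, star a (star b c) - star (star c b) a
      - (2 : F) • cdot (cdot b c) (D a) + (4 : F) • cdot (cdot a b) (D c) = 0) :
    alternation (fun x y z => star (star x y) z) a b c +
      alternation (fun x y z => star x (star y z)) a b c = 0 := by
  have h := alternation_eq_zero_of_forall_eq_zero _ a b c hid1
  simp only [alternation_add, alternation_sub, alternation_smul,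
    alternation_reverse (fun x y z => star (star x y) z),
    alternation_eq_zero_of_comm_last (fun x y z => cdot (cdot y z) (D x)) a b c
      fun x y z => by rw [hcomm y z],
    alternation_eq_zero_of_comm_first (fun x y z => cdot (cdot x y) (D z)) a b c
      fun x y z => by rw [hcomm x y]] at h
  rw [← h]; module

lemma alternation_right_eq_two_smul_alternation_left [CharZero F]
    (hcomm : ∀ x y, cdot x y = cdot y x)
    (hid2 : ∀ a b c : A, star (star a b) c - star a (star b c)
      - (2 : F)⁻¹ • star (star a c) b + (2 : F)⁻¹ • star (star c a) b
      - (2 : F) • cdot (cdot a b) (D c) = 0) :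
    alternation (fun x y z => star x (star y z)) a b c =
      (2 : F) • alternation (fun x y z => star (star x y) z) a b c := by
  have h := alternation_eq_zero_of_forall_eq_zero _ a b c hid2
  simp only [alternation_add, alternation_sub, alternation_smul,
    alternation_swap_last (fun x y z => star (star x y) z),
    alternation_rotate (fun x y z => star (star x y) z),
    alternation_eq_zero_of_comm_first (fun x y z => cdot (cdot x y) (D z)) a b c
      fun x y z => by rw [hcomm x y]] at h
  rw [← sub_eq_zero, ← neg_eq_zero, ← h]; module

end Identities

def bracket (star : A →ₗ[F] A →ₗ[F] A) (a b : A) : A :=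
  (2 : F)⁻¹ • (star a b - star b a)

lemma four_smul_jacobi_bracket [CharZero F] (star : A →ₗ[F] A →ₗ[F] A) :
    (4 : F) • (bracket star (bracket star a b) c + bracket star (bracket star b c) a +
        bracket star (bracket star c a) b) =
      alternation (fun x y z => star (star x y) z) a b c -
        alternation (fun x y z => star x (star y z)) a b c := by
  simp only [bracket, alternation, map_sub, map_smul, LinearMap.sub_apply, LinearMap.smul_apply,
    smul_sub, smul_add, smul_smul]
  module

end LieAdmissible

open LieAdmissible in
theorem stmt_8 (F : Type*) [Field F] [CharZero F]
    (A : Type*) [AddCommGroup A] [Module F A]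
    (star : A →ₗ[F] A →ₗ[F] A) (D : A →ₗ[F] A)
    (cdot lb : A → A → A)
    (hcdot : ∀ a b : A, cdot a b = (2 : F)⁻¹ • (star a b + star b a))
    (hlb : ∀ a b : A, lb a b = (2 : F)⁻¹ • (star a b - star b a))
    (hid1 : ∀ a b c : A, star a (star b c) - star (star c b) a
      - (2 : F) • cdot (cdot b c) (D a) + (4 : F) • cdot (cdot a b) (D c) = 0)
    (hid2 : ∀ a b c : A, star (star a b) c - star a (star b c)
      - (2 : F)⁻¹ • star (star a c) b + (2 : F)⁻¹ • star (star c a) b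
      - (2 : F) • cdot (cdot a b) (D c) = 0)
    :
    ∀ a b c : A, lb (lb a b) c + lb (lb b c) a + lb (lb c a) b = 0 := by
  intro a b c
  obtain rfl : lb = bracket star := funext₂ hlb
  have hcomm : ∀ x y, cdot x y = cdot y x := fun x y => by rw [hcdot, hcdot, add_comm]
  have hsum := alternation_left_add_alternation_right_eq_zero a b c (⇑star ·) cdot D hcomm hid1
  have htwice := alternation_right_eq_two_smul_alternation_left a b c (⇑star ·) cdot D hcomm hid2
  have hleft : alternation (fun x y z => star (star x y) z) a b c = 0 := by
    have hthrice : (3 : F) • alternation (fun x y z => star (star x y) z) a b c = 0 := by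
      rw [← hsum, htwice]; module
    exact (smul_eq_zero.mp hthrice).resolve_left three_ne_zero
  rw [hleft, smul_zero] at htwice
  have hfour := four_smul_jacobi_bracket a b c star
  rw [hleft, htwice, sub_zero] at hfour
  exact (smul_eq_zero.mp hfour).resolve_left (by norm_num)
end

section
/- Let F be a field of characteristic 0 and let P be a generalized Poisson algebra over F: a commutative associative product ·, a Lie bracket [,], and an F-linear derivation D of both products satisfying [a·b,c] = a·[b,c] + [a,c]·b + a·b·D(c) for all a,b,c ∈ P. Let A and B be abelian subalgebras of P (x·y = 0 and [x,y] = 0 for all x,y in A, and likewise in B), and suppose P = A + B. Then c₁·[c₂,c₃]·c₄ = 0 for all c₁,c₂,c₃,c₄ ∈ P. -/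
/-! Since `A · A = B · B = 0` and `P = A + B`, by trilinearity it suffices to show `(x · y) · z = 0`
when each of `x, y, z` lies in `A` or in `B`. Two of them then lie in the same summand, and
commutativity and associativity bring these two next to each other. Hence `P · P · P = 0`, and in
particular `c₁ · [c₂, c₃] · c₄ = 0`. -/

section NullProduct

variable {R M : Type*} [CommSemiring R] [AddCommMonoid M] [Module R M]
  (mul : M →ₗ[R] M →ₗ[R] M)
  (hcomm : ∀ a b : M, mul a b = mul b a)
  (hassoc : ∀ a b c : M, mul (mul a b) c = mul a (mul b c))
include hcomm hassoc

theorem mul_mul_eq_zero_of_two_mem {S : Submodule R M} (hS : ∀ x ∈ S, ∀ y ∈ S, mul x y = 0)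
    {x y z : M} (h : x ∈ S ∧ y ∈ S ∨ x ∈ S ∧ z ∈ S ∨ y ∈ S ∧ z ∈ S) :
    mul (mul x y) z = 0 := by
  rcases h with ⟨hx, hy⟩ | ⟨hx, hz⟩ | ⟨hy, hz⟩
  · rw [hS x hx y hy, LinearMap.map_zero₂]
  · rw [hassoc, hcomm y z, ← hassoc, hS x hx z hz, LinearMap.map_zero₂]
  · rw [hassoc, hS y hy z hz, map_zero]

theorem mul_mul_eq_zero_of_mem_or_mem {A B : Submodule R M}
    (hA : ∀ x ∈ A, ∀ y ∈ A, mul x y = 0) (hB : ∀ x ∈ B, ∀ y ∈ B, mul x y = 0)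
    {x y z : M} (hx : x ∈ A ∨ x ∈ B) (hy : y ∈ A ∨ y ∈ B) (hz : z ∈ A ∨ z ∈ B) :
    mul (mul x y) z = 0 := by
  rcases hx with hx | hx <;> rcases hy with hy | hy <;> rcases hz with hz | hz <;>
    first
    | exact mul_mul_eq_zero_of_two_mem mul hcomm hassoc hA (by tauto)
    | exact mul_mul_eq_zero_of_two_mem mul hcomm hassoc hB (by tauto)

theorem mul_mul_eq_zero_of_forall_eq_add {A B : Submodule R M}
    (hA : ∀ x ∈ A, ∀ y ∈ A, mul x y = 0) (hB : ∀ x ∈ B, ∀ y ∈ B, mul x y = 0)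
    (hsum : ∀ p : M, ∃ a ∈ A, ∃ b ∈ B, p = a + b) (x y z : M) :
    mul (mul x y) z = 0 := by
  obtain ⟨xa, hxa, xb, hxb, rfl⟩ := hsum x
  obtain ⟨ya, hya, yb, hyb, rfl⟩ := hsum y
  obtain ⟨za, hza, zb, hzb, rfl⟩ := hsum z
  simp only [map_add, LinearMap.add_apply,
    mul_mul_eq_zero_of_mem_or_mem mul hcomm hassoc hA hB, hxa, hxb, hya, hyb, hza, hzb,
    true_or, or_true, add_zero]

end NullProduct

theorem stmt_13_general (F : Type*) [Field F]
    (P : Type*) [AddCommGroup P] [Module F P]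
    (mul br : P →ₗ[F] P →ₗ[F] P)
    (hcomm : ∀ a b : P, mul a b = mul b a)
    (hassoc : ∀ a b c : P, mul (mul a b) c = mul a (mul b c))
    (A B : Submodule F P)
    (hA : ∀ x ∈ A, ∀ y ∈ A, mul x y = 0 ∧ br x y = 0)
    (hB : ∀ x ∈ B, ∀ y ∈ B, mul x y = 0 ∧ br x y = 0)
    (hsum : ∀ p : P, ∃ a ∈ A, ∃ b ∈ B, p = a + b)
    :
    ∀ c₁ c₂ c₃ c₄ : P, mul (mul c₁ (br c₂ c₃)) c₄ = 0 :=
  fun c₁ c₂ c₃ c₄ => mul_mul_eq_zero_of_forall_eq_add mul hcomm hassoc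
    (fun x hx y hy => (hA x hx y hy).1) (fun x hx y hy => (hB x hx y hy).1) hsum c₁ (br c₂ c₃) c₄

theorem stmt_13 (F : Type*) [Field F] [CharZero F]
    (P : Type*) [AddCommGroup P] [Module F P]
    (mul br : P →ₗ[F] P →ₗ[F] P) (D : P →ₗ[F] P)
    (hcomm : ∀ a b : P, mul a b = mul b a)
    (hassoc : ∀ a b c : P, mul (mul a b) c = mul a (mul b c))
    (hanti : ∀ a b : P, br a b = - br b a)
    (hjac : ∀ a b c : P, br (br a b) c + br (br b c) a + br (br c a) b = 0)
    (hDmul : ∀ a b : P, D (mul a b) = mul (D a) b + mul a (D b))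
    (hDbr : ∀ a b : P, D (br a b) = br (D a) b + br a (D b))
    (hGP : ∀ a b c : P, br (mul a b) c =
      mul a (br b c) + mul (br a c) b + mul (mul a b) (D c))
    (A B : Submodule F P)
    (hA : ∀ x ∈ A, ∀ y ∈ A, mul x y = 0 ∧ br x y = 0)
    (hB : ∀ x ∈ B, ∀ y ∈ B, mul x y = 0 ∧ br x y = 0)
    (hsum : ∀ p : P, ∃ a ∈ A, ∃ b ∈ B, p = a + b)
    :
    ∀ c₁ c₂ c₃ c₄ : P, mul (mul c₁ (br c₂ c₃)) c₄ = 0 :=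
  stmt_13_general F P mul br hcomm hassoc A B hA hB hsum
end

section
/- Let F be a field of characteristic 0 and let P be a generalized Poisson algebra over F: a commutative associative product ·, a Lie bracket [,], and an F-linear derivation D of both products satisfying [a·b,c] = a·[b,c] + [a,c]·b + a·b·D(c) for all a,b,c ∈ P. Let A and B be abelian subalgebras of P (x·y = 0 and [x,y] = 0 for all x,y in A, and likewise in B), and suppose P = A + B. Then [c₁·c₂, [c₃,c₄]] = 0 for all c₁,c₂,c₃,c₄ ∈ P. -/
/-! Write `P = A + B`. Since `A·A = B·B = 0`, every product `c₁·c₂` is a sum of products `a·b`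
with `a ∈ A`, `b ∈ B`, and likewise every bracket `[c₃, c₄]` is a sum of brackets `[a', b']`.
Each product `a·b` annihilates `P` (move the factor of `z = z_A + z_B` onto the factor from the
same subalgebra), so the generalized Leibniz rule loses its `D`-term:
`[a·b, [a', b']] = a·[b, [a', b']] + [a, [a', b']]·b`. Jacobi turns this into
`a·[v, b'] + [u, a']·b` with `v = [b, a']`, `u = [b', a]`, and the rule `x·[y, c] = -y·[x, c]`
(valid whenever `x·y = 0`) reduces both terms to `v_A·u_B - u_B·v_A = 0`. -/

section GeneralizedPoisson

variable {R P : Type*} [CommRing R] [AddCommGroup P] [Module R P]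

theorem bilin_add_add_eq_of_isotropic (f : P →ₗ[R] P →ₗ[R] P) {A B : Submodule R P}
    (hA : ∀ x ∈ A, ∀ y ∈ A, f x y = 0) (hB : ∀ x ∈ B, ∀ y ∈ B, f x y = 0)
    {a₁ a₂ b₁ b₂ : P} (ha₁ : a₁ ∈ A) (ha₂ : a₂ ∈ A) (hb₁ : b₁ ∈ B) (hb₂ : b₂ ∈ B) :
    f (a₁ + b₁) (a₂ + b₂) = f a₁ b₂ + f b₁ a₂ := by
  simp only [map_add, LinearMap.add_apply, hA a₁ ha₁ a₂ ha₂, hB b₁ hb₁ b₂ hb₂, zero_add,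
    add_zero]
  exact add_comm _ _

theorem br_br_eq_add_of_jacobi (br : P →ₗ[R] P →ₗ[R] P)
    (hanti : ∀ a b : P, br a b = - br b a)
    (hjac : ∀ a b c : P, br (br a b) c + br (br b c) a + br (br c a) b = 0) (x y z : P) :
    br x (br y z) = br (br z x) y + br (br x y) z := by
  rw [hanti x, neg_eq_iff_add_eq_zero, ← add_assoc]
  exact hjac y z x

theorem mul_br_eq_neg_of_mul_eq_zero (mul br : P →ₗ[R] P →ₗ[R] P) (D : P →ₗ[R] P)
    (hcomm : ∀ a b : P, mul a b = mul b a)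
    (hGP : ∀ a b c : P, br (mul a b) c =
      mul a (br b c) + mul (br a c) b + mul (mul a b) (D c))
    {x y : P} (hxy : mul x y = 0) (c : P) :
    mul x (br y c) = - mul y (br x c) := by
  have h := hGP x y c
  rw [hxy, map_zero, LinearMap.zero_apply, map_zero, LinearMap.zero_apply, add_zero,
    hcomm (br x c) y] at h
  exact eq_neg_of_add_eq_zero_left h.symm

theorem mul_mul_eq_zero_of_mem (mul : P →ₗ[R] P →ₗ[R] P)
    (hcomm : ∀ a b : P, mul a b = mul b a)
    (hassoc : ∀ a b c : P, mul (mul a b) c = mul a (mul b c))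
    {A B : Submodule R P}
    (hA : ∀ x ∈ A, ∀ y ∈ A, mul x y = 0) (hB : ∀ x ∈ B, ∀ y ∈ B, mul x y = 0)
    (hsum : ∀ p : P, ∃ a ∈ A, ∃ b ∈ B, p = a + b)
    {a b : P} (ha : a ∈ A) (hb : b ∈ B) (z : P) :
    mul (mul a b) z = 0 := by
  obtain ⟨za, hza, zb, hzb, rfl⟩ := hsum z
  have hzA : mul (mul a b) za = 0 := by rw [hcomm a b, hassoc, hA a ha za hza, map_zero]
  have hzB : mul (mul a b) zb = 0 := by rw [hassoc, hB b hb zb hzb, map_zero]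
  rw [map_add, hzA, hzB, add_zero]

theorem br_mul_br_eq_zero_of_mem (mul br : P →ₗ[R] P →ₗ[R] P) (D : P →ₗ[R] P)
    (hcomm : ∀ a b : P, mul a b = mul b a)
    (hassoc : ∀ a b c : P, mul (mul a b) c = mul a (mul b c))
    (hanti : ∀ a b : P, br a b = - br b a)
    (hjac : ∀ a b c : P, br (br a b) c + br (br b c) a + br (br c a) b = 0)
    (hGP : ∀ a b c : P, br (mul a b) c =
      mul a (br b c) + mul (br a c) b + mul (mul a b) (D c))
    {A B : Submodule R P}
    (hA : ∀ x ∈ A, ∀ y ∈ A, mul x y = 0 ∧ br x y = 0)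
    (hB : ∀ x ∈ B, ∀ y ∈ B, mul x y = 0 ∧ br x y = 0)
    (hsum : ∀ p : P, ∃ a ∈ A, ∃ b ∈ B, p = a + b)
    {a a' b b' : P} (ha : a ∈ A) (ha' : a' ∈ A) (hb : b ∈ B) (hb' : b' ∈ B) :
    br (mul a b) (br a' b') = 0 := by
  have leibniz :
      br (mul a b) (br a' b') = mul a (br b (br a' b')) + mul (br a (br a' b')) b := by
    rw [hGP, mul_mul_eq_zero_of_mem mul hcomm hassoc (fun x hx y hy => (hA x hx y hy).1)
      (fun x hx y hy => (hB x hx y hy).1) hsum ha hb, add_zero]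
  have jacobi_b : br b (br a' b') = br (br b a') b' := by
    rw [br_br_eq_add_of_jacobi br hanti hjac, (hB b' hb' b hb).2, map_zero, LinearMap.zero_apply,
      zero_add]
  have jacobi_a : br a (br a' b') = br (br b' a) a' := by
    rw [br_br_eq_add_of_jacobi br hanti hjac, (hA a ha a' ha').2, map_zero, LinearMap.zero_apply,
      add_zero]
  obtain ⟨va, hva, vb, hvb, hv⟩ := hsum (br b a')
  obtain ⟨ua, hua, ub, hub, hu⟩ := hsum (br b' a)
  have hleft : mul a (br (br b a') b') = mul va (br b' a) := by
    rw [hv, map_add, LinearMap.add_apply, (hB vb hvb b' hb').2, add_zero,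
      mul_br_eq_neg_of_mul_eq_zero mul br D hcomm hGP (hA a ha va hva).1, hanti a b', map_neg,
      neg_neg]
  have hright : mul (br (br b' a) a') b = - mul ub (br b a') := by
    rw [hu, map_add, LinearMap.add_apply, (hA ua hua a' ha').2, zero_add, hcomm _ b,
      mul_br_eq_neg_of_mul_eq_zero mul br D hcomm hGP (hB b hb ub hub).1]
  rw [leibniz, jacobi_b, jacobi_a, hleft, hright, hu, hv, map_add, map_add, (hA va hva ua hua).1,
    (hB ub hub vb hvb).1, zero_add, add_zero, hcomm va ub, add_neg_cancel]

theorem br_mul_br_eq_zero_of_mul_mem (mul br : P →ₗ[R] P →ₗ[R] P) (D : P →ₗ[R] P)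
    (hcomm : ∀ a b : P, mul a b = mul b a)
    (hassoc : ∀ a b c : P, mul (mul a b) c = mul a (mul b c))
    (hanti : ∀ a b : P, br a b = - br b a)
    (hjac : ∀ a b c : P, br (br a b) c + br (br b c) a + br (br c a) b = 0)
    (hGP : ∀ a b c : P, br (mul a b) c =
      mul a (br b c) + mul (br a c) b + mul (mul a b) (D c))
    {A B : Submodule R P}
    (hA : ∀ x ∈ A, ∀ y ∈ A, mul x y = 0 ∧ br x y = 0)
    (hB : ∀ x ∈ B, ∀ y ∈ B, mul x y = 0 ∧ br x y = 0)
    (hsum : ∀ p : P, ∃ a ∈ A, ∃ b ∈ B, p = a + b)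
    {a b : P} (ha : a ∈ A) (hb : b ∈ B) (c d : P) :
    br (mul a b) (br c d) = 0 := by
  obtain ⟨ca, hca, cb, hcb, rfl⟩ := hsum c
  obtain ⟨da, hda, db, hdb, rfl⟩ := hsum d
  rw [bilin_add_add_eq_of_isotropic br (fun x hx y hy => (hA x hx y hy).2)
      (fun x hx y hy => (hB x hx y hy).2) hca hda hcb hdb, hanti cb da, map_add, map_neg,
    br_mul_br_eq_zero_of_mem mul br D hcomm hassoc hanti hjac hGP hA hB hsum ha hca hb hdb,
    br_mul_br_eq_zero_of_mem mul br D hcomm hassoc hanti hjac hGP hA hB hsum ha hda hb hcb,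
    neg_zero, add_zero]

end GeneralizedPoisson

theorem stmt_16_general (F : Type*) [Field F]
    (P : Type*) [AddCommGroup P] [Module F P]
    (mul br : P →ₗ[F] P →ₗ[F] P) (D : P →ₗ[F] P)
    (hcomm : ∀ a b : P, mul a b = mul b a)
    (hassoc : ∀ a b c : P, mul (mul a b) c = mul a (mul b c))
    (hanti : ∀ a b : P, br a b = - br b a)
    (hjac : ∀ a b c : P, br (br a b) c + br (br b c) a + br (br c a) b = 0)
    (hGP : ∀ a b c : P, br (mul a b) c =
      mul a (br b c) + mul (br a c) b + mul (mul a b) (D c))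
    (A B : Submodule F P)
    (hA : ∀ x ∈ A, ∀ y ∈ A, mul x y = 0 ∧ br x y = 0)
    (hB : ∀ x ∈ B, ∀ y ∈ B, mul x y = 0 ∧ br x y = 0)
    (hsum : ∀ p : P, ∃ a ∈ A, ∃ b ∈ B, p = a + b)
    :
    ∀ c₁ c₂ c₃ c₄ : P, br (mul c₁ c₂) (br c₃ c₄) = 0 := by
  intro c₁ c₂ c₃ c₄
  obtain ⟨a₁, ha₁, b₁, hb₁, rfl⟩ := hsum c₁
  obtain ⟨a₂, ha₂, b₂, hb₂, rfl⟩ := hsum c₂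
  have key {a b : P} (ha : a ∈ A) (hb : b ∈ B) : br (mul a b) (br c₃ c₄) = 0 :=
    br_mul_br_eq_zero_of_mul_mem mul br D hcomm hassoc hanti hjac hGP hA hB hsum ha hb c₃ c₄
  rw [bilin_add_add_eq_of_isotropic mul (fun x hx y hy => (hA x hx y hy).1)
      (fun x hx y hy => (hB x hx y hy).1) ha₁ ha₂ hb₁ hb₂, hcomm b₁, map_add, LinearMap.add_apply,
    key ha₁ hb₂, key ha₂ hb₁, add_zero]

theorem stmt_16 (F : Type*) [Field F] [CharZero F]
    (P : Type*) [AddCommGroup P] [Module F P]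
    (mul br : P →ₗ[F] P →ₗ[F] P) (D : P →ₗ[F] P)
    (hcomm : ∀ a b : P, mul a b = mul b a)
    (hassoc : ∀ a b c : P, mul (mul a b) c = mul a (mul b c))
    (hanti : ∀ a b : P, br a b = - br b a)
    (hjac : ∀ a b c : P, br (br a b) c + br (br b c) a + br (br c a) b = 0)
    (hDmul : ∀ a b : P, D (mul a b) = mul (D a) b + mul a (D b))
    (hDbr : ∀ a b : P, D (br a b) = br (D a) b + br a (D b))
    (hGP : ∀ a b c : P, br (mul a b) c =
      mul a (br b c) + mul (br a c) b + mul (mul a b) (D c))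
    (A B : Submodule F P)
    (hA : ∀ x ∈ A, ∀ y ∈ A, mul x y = 0 ∧ br x y = 0)
    (hB : ∀ x ∈ B, ∀ y ∈ B, mul x y = 0 ∧ br x y = 0)
    (hsum : ∀ p : P, ∃ a ∈ A, ∃ b ∈ B, p = a + b)
    :
    ∀ c₁ c₂ c₃ c₄ : P, br (mul c₁ c₂) (br c₃ c₄) = 0 :=
  stmt_16_general F P mul br D hcomm hassoc hanti hjac hGP A B hA hB hsum
end

section
/- Let F be a field of characteristic 0 and let P be a generalized Poisson algebra over F: a commutative associative product ·, a Lie bracket [,], and an F-linear derivation D of both products satisfying [a·b,c] = a·[b,c] + [a,c]·b + a·b·D(c) for all a,b,c ∈ P. Let A and B be abelian subalgebras of P (x·y = 0 and [x,y] = 0 for all x,y in A, and likewise in B), and suppose P = A + B. Then [c₁,c₂]·[c₃,c₄] = 0 for all c₁,c₂,c₃,c₄ ∈ P. -/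
/-!
Write elements as `a + b` with `a ∈ A`, `b ∈ B`. Since `A` and `B` are abelian,
`[a₁ + b₁, a₂ + b₂] = [a₁, b₂] - [a₂, b₁]`, so it suffices to show `[a, b]·[a', b'] = 0`
for `a, a' ∈ A` and `b, b' ∈ B`. Because `a·a' = 0`, the generalized Leibniz rule gives
`a·[a', b'] = -a'·[a, b']`; applying the rule once more to both sides, bracketed with `b`,
the `D b` terms cancel and `[a, b]·[a', b']` becomes a sum of products of the `A`- and
`B`-components of `[a, b']` and `[a', b]`, which cancel by commutativity.
-/

section GeneralizedPoisson

variable {R P : Type*} [CommRing R] [AddCommGroup P] [Module R P]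
  {mul br : P →ₗ[R] P →ₗ[R] P}

def IsAbelianSubalgebra (mul br : P →ₗ[R] P →ₗ[R] P) (A : Submodule R P) : Prop :=
  ∀ x ∈ A, ∀ y ∈ A, mul x y = 0 ∧ br x y = 0

theorem mul_br_eq_neg_mul_br_of_mul_eq_zero (D : P →ₗ[R] P)
    (hcomm : ∀ a b : P, mul a b = mul b a)
    (hGP : ∀ a b c : P, br (mul a b) c =
      mul a (br b c) + mul (br a c) b + mul (mul a b) (D c))
    ⦃x y : P⦄ (h : mul x y = 0) (c : P) :
    mul x (br y c) = -mul y (br x c) := by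
  have hxy := hGP x y c
  simp only [h, map_zero, LinearMap.zero_apply, add_zero] at hxy
  linear_combination (norm := module) -hxy - hcomm (br x c) y

theorem br_br_comm_of_br_eq_zero
    (hanti : ∀ a b : P, br a b = -br b a)
    (hjac : ∀ a b c : P, br (br a b) c + br (br b c) a + br (br c a) b = 0)
    {y z : P} (h : br y z = 0) (x : P) :
    br (br x y) z = br (br x z) y := by
  have hxyz := hjac x y z
  rw [h, hanti z x] at hxyz
  simp only [map_zero, LinearMap.zero_apply, map_neg, LinearMap.neg_apply, add_zero] at hxyz
  linear_combination (norm := module) hxyz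

theorem mul_br_add_mul_br_of_mul_eq_zero (D : P →ₗ[R] P)
    (hcomm : ∀ a b : P, mul a b = mul b a)
    (hGP : ∀ a b c : P, br (mul a b) c =
      mul a (br b c) + mul (br a c) b + mul (mul a b) (D c))
    {x y : P} (h : mul x y = 0) (z c : P) :
    mul (br x c) (br y z) + mul (br y c) (br x z) =
      -(mul x (br (br y z) c) + mul y (br (br x z) c)) := by
  have hx := hGP x (br y z) c
  have hy := hGP y (br x z) c
  rw [mul_br_eq_neg_mul_br_of_mul_eq_zero D hcomm hGP h] at hx
  simp only [map_neg, LinearMap.neg_apply] at hx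
  linear_combination (norm := module) -hx - hy

theorem br_add_add_of_isAbelianSubalgebra (hanti : ∀ a b : P, br a b = -br b a)
    {A B : Submodule R P} (hA : IsAbelianSubalgebra mul br A)
    (hB : IsAbelianSubalgebra mul br B) ⦃a₁ a₂ b₁ b₂ : P⦄
    (ha₁ : a₁ ∈ A) (ha₂ : a₂ ∈ A) (hb₁ : b₁ ∈ B) (hb₂ : b₂ ∈ B) :
    br (a₁ + b₁) (a₂ + b₂) = br a₁ b₂ - br a₂ b₁ := by
  simp only [map_add, LinearMap.add_apply, (hA a₁ ha₁ a₂ ha₂).2, (hB b₁ hb₁ b₂ hb₂).2,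
    hanti b₁ a₂]
  abel

theorem mul_br_br_eq_zero_of_isAbelianSubalgebra (D : P →ₗ[R] P)
    (hcomm : ∀ a b : P, mul a b = mul b a)
    (hanti : ∀ a b : P, br a b = -br b a)
    (hjac : ∀ a b c : P, br (br a b) c + br (br b c) a + br (br c a) b = 0)
    (hGP : ∀ a b c : P, br (mul a b) c =
      mul a (br b c) + mul (br a c) b + mul (mul a b) (D c))
    {A B : Submodule R P} (hA : IsAbelianSubalgebra mul br A)
    (hB : IsAbelianSubalgebra mul br B) (hsum : ∀ p : P, ∃ a ∈ A, ∃ b ∈ B, p = a + b)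
    ⦃a a' b b' : P⦄ (ha : a ∈ A) (ha' : a' ∈ A) (hb : b ∈ B) (hb' : b' ∈ B) :
    mul (br a b) (br a' b') = 0 := by
  have swap := mul_br_eq_neg_mul_br_of_mul_eq_zero D hcomm hGP
  obtain ⟨α, hα, β, hβ, hab'⟩ := hsum (br a b')
  obtain ⟨α', hα', β', hβ', ha'b⟩ := hsum (br a' b)
  have hbr₁ : br (br a' b') b = br α' b' := by
    rw [br_br_comm_of_br_eq_zero hanti hjac (hB b' hb' b hb).2, ha'b, map_add,
      LinearMap.add_apply, (hB β' hβ' b' hb').2, add_zero]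
  have hbr₂ : br (br a b') b = br α b := by
    rw [hab', map_add, LinearMap.add_apply, (hB β hβ b hb).2, add_zero]
  have hmul₁ : mul a (br (br a' b') b) = -mul α' β := by
    rw [hbr₁, swap (hA a ha α' hα').1, hab', map_add, (hA α' hα' α hα).1, zero_add]
  have hmul₂ : mul a' (br (br a b') b) = -mul α β' := by
    rw [hbr₂, swap (hA a' ha' α hα).1, ha'b, map_add, (hA α hα α' hα').1, zero_add]
  have hmul₃ : mul (br a' b) (br a b') = mul β' α + mul α' β := by
    simp only [ha'b, hab', map_add, LinearMap.add_apply, (hA α' hα' α hα).1,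
      (hB β' hβ' β hβ).1, zero_add, add_zero]
  have key := mul_br_add_mul_br_of_mul_eq_zero D hcomm hGP (hA a ha a' ha').1 b' b
  linear_combination (norm := module) key - hmul₁ - hmul₂ - hmul₃ - hcomm β' α

end GeneralizedPoisson

theorem stmt_17_general (F : Type*) [Field F]
    (P : Type*) [AddCommGroup P] [Module F P]
    (mul br : P →ₗ[F] P →ₗ[F] P) (D : P →ₗ[F] P)
    (hcomm : ∀ a b : P, mul a b = mul b a)
    (hanti : ∀ a b : P, br a b = - br b a)
    (hjac : ∀ a b c : P, br (br a b) c + br (br b c) a + br (br c a) b = 0)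
    (hGP : ∀ a b c : P, br (mul a b) c =
      mul a (br b c) + mul (br a c) b + mul (mul a b) (D c))
    (A B : Submodule F P)
    (hA : ∀ x ∈ A, ∀ y ∈ A, mul x y = 0 ∧ br x y = 0)
    (hB : ∀ x ∈ B, ∀ y ∈ B, mul x y = 0 ∧ br x y = 0)
    (hsum : ∀ p : P, ∃ a ∈ A, ∃ b ∈ B, p = a + b)
    :
    ∀ c₁ c₂ c₃ c₄ : P, mul (br c₁ c₂) (br c₃ c₄) = 0 := by
  have hbr := br_add_add_of_isAbelianSubalgebra hanti hA hB
  have key := mul_br_br_eq_zero_of_isAbelianSubalgebra D hcomm hanti hjac hGP hA hB hsum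
  intro c₁ c₂ c₃ c₄
  obtain ⟨a₁, ha₁, b₁, hb₁, rfl⟩ := hsum c₁
  obtain ⟨a₂, ha₂, b₂, hb₂, rfl⟩ := hsum c₂
  obtain ⟨a₃, ha₃, b₃, hb₃, rfl⟩ := hsum c₃
  obtain ⟨a₄, ha₄, b₄, hb₄, rfl⟩ := hsum c₄
  rw [hbr ha₁ ha₂ hb₁ hb₂, hbr ha₃ ha₄ hb₃ hb₄]
  simp only [map_sub, LinearMap.sub_apply, key ha₁ ha₃ hb₂ hb₄, key ha₁ ha₄ hb₂ hb₃,
    key ha₂ ha₃ hb₁ hb₄, key ha₂ ha₄ hb₁ hb₃, sub_zero]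

theorem stmt_17 (F : Type*) [Field F] [CharZero F]
    (P : Type*) [AddCommGroup P] [Module F P]
    (mul br : P →ₗ[F] P →ₗ[F] P) (D : P →ₗ[F] P)
    (hcomm : ∀ a b : P, mul a b = mul b a)
    (hassoc : ∀ a b c : P, mul (mul a b) c = mul a (mul b c))
    (hanti : ∀ a b : P, br a b = - br b a)
    (hjac : ∀ a b c : P, br (br a b) c + br (br b c) a + br (br c a) b = 0)
    (hDmul : ∀ a b : P, D (mul a b) = mul (D a) b + mul a (D b))
    (hDbr : ∀ a b : P, D (br a b) = br (D a) b + br a (D b))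
    (hGP : ∀ a b c : P, br (mul a b) c =
      mul a (br b c) + mul (br a c) b + mul (mul a b) (D c))
    (A B : Submodule F P)
    (hA : ∀ x ∈ A, ∀ y ∈ A, mul x y = 0 ∧ br x y = 0)
    (hB : ∀ x ∈ B, ∀ y ∈ B, mul x y = 0 ∧ br x y = 0)
    (hsum : ∀ p : P, ∃ a ∈ A, ∃ b ∈ B, p = a + b)
    :
    ∀ c₁ c₂ c₃ c₄ : P, mul (br c₁ c₂) (br c₃ c₄) = 0 :=
  stmt_17_general F P mul br D hcomm hanti hjac hGP A B hA hB hsum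
end
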